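/- Let L be a Lie algebra in the class T with root system R, R^0 its set of isotropic roots and R^× its non-isotropic roots. Then (R, R^0) = {0}, i.e., (α, δ) = 0 for all α ∈ R and δ ∈ R^0. -/

import Mathlib

open scoped Classical

namespace Gen

variable (F L : Type*) [Field F] [CharZero F] [LieRing L] [LieAlgebra F L]

/-- The weight space of a linear functional `α` on a subalgebra `H`. -/
def wt (H : LieSubalgebra F L) (α : Module.Dual F H) : Submodule F L where
  carrier := {x : L | ∀ h : H, ⁅(h : L), x⁆ = α h • x}
  add_mem' := by
    intro a b ha hb h
    rw [lie_add, ha h, hb h, smul_add]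
  zero_mem' := by intro h; simp
  smul_mem' := by
    intro c x hx h
    rw [lie_smul, hx h, smul_comm]

/-- Data for axioms (T1) and (T2): a non-degenerate symmetric invariant bilinear form,
a finite dimensional split toral subalgebra `H` on which the form is non-degenerate,
together with the representatives `t_α ∈ H` of linear functionals on `H`. -/
structure TData where
  B : L →ₗ[F] L →ₗ[F] F
  bsymm : ∀ x y, B x y = B y x
  binv : ∀ x y z, B ⁅x, y⁆ z = B x ⁅y, z⁆
  bnondeg : ∀ x, (∀ y, B x y = 0) → x = 0
  H : LieSubalgebra F L
  hne : H ≠ ⊥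
  hfin : FiniteDimensional F H
  hnondeg : ∀ h : H, (∀ h' : H, B h h' = 0) → h = 0
  decomp : DirectSum.IsInternal (wt F L H)
  t : Module.Dual F H → H
  tspec : ∀ (α : Module.Dual F H) (h : H), B (t α) h = α h

variable {F L}

namespace TData

variable (T : TData F L)

/-- The form transferred to the dual of `H`: `(α, β) = (t_α, t_β)`. -/
def pr (α β : Module.Dual F T.H) : F := T.B (T.t α) (T.t β)

/-- The root system `R = {α : L_α ≠ 0}`. -/
def R : Set (Module.Dual F T.H) := {α | wt F L T.H α ≠ ⊥}

/-- Non-isotropic roots. -/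
def Rx : Set (Module.Dual F T.H) := {α | α ∈ T.R ∧ T.pr α α ≠ 0}

/-- Isotropic roots. -/
def R0 : Set (Module.Dual F T.H) := {α | α ∈ T.R ∧ T.pr α α = 0}

/-- The core: the subalgebra generated by the non-isotropic root spaces. -/
def core : LieSubalgebra F L :=
  LieSubalgebra.lieSpan F L (⋃ α ∈ T.Rx, (wt F L T.H α : Set L))

end TData

variable (F L)

/-- A Lie algebra in the class 𝒯: axioms (T1)–(T6). -/
structure TAlg extends TData F L where
  t3a : ∀ δ ∈ toTData.R0, ∃ x ∈ wt F L toTData.H δ, ∃ y ∈ wt F L toTData.H (-δ),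
          ⁅x, y⁆ = (toTData.t δ : L)
  t3b : ∀ α ∈ toTData.Rx, ∀ x ∈ wt F L toTData.H α, x ≠ 0 →
          ∃ y ∈ wt F L toTData.H (-α), ⁅x, y⁆ = (toTData.t α : L)
  t4 : ∀ α ∈ toTData.Rx, ∀ x ∈ wt F L toTData.H α, ∀ y : L,
          ∃ n : ℕ, ((LieAlgebra.ad F L x) ^ n) y = 0
  t5a : ∀ S1 S2 : Set (Module.Dual F toTData.H), S1.Nonempty → S2.Nonempty →
          S1 ∪ S2 = toTData.Rx → Disjoint S1 S2 →
          ∃ a ∈ S1, ∃ b ∈ S2, toTData.pr a b ≠ 0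
  t5b : ∀ δ ∈ toTData.R0, ∃ α ∈ toTData.Rx, α + δ ∈ toTData.R
  t6free : Module.Free ℤ (AddSubgroup.closure toTData.R0)
  t6fin : Module.Finite ℤ (AddSubgroup.closure toTData.R0)

end Gen

/-!
Let `γ` be a non-isotropic and `δ` an isotropic root with `(γ, δ) ≠ 0`. The `sl₂`-triple through
`L_γ` makes `2(δ, γ)/(γ, γ) = m` a nonzero integer, and replacing `δ` by `-δ` we may take `m > 0`.
Then `γ + δ` and `γ - 3δ` would be non-isotropic roots violating the same integrality, so they are
not roots. Pick `x ∈ L_δ`, `y ∈ L_{-δ}` with `⁅x, y⁆ = t_δ`, and `0 ≠ e ∈ L_γ`: now `⁅x, e⁆ = 0`,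
`(ad y)³ e = 0`, and `t_δ` acts on the `y`-string of `e` by `(γ, δ) ≠ 0`; in this Heisenberg
situation `x` lowers the string, `⁅x, (ad y)^(k+1) e⁆ = (k+1)(γ, δ) (ad y)^k e`, which forces
`e = 0`. For isotropic `α` with `(α, δ) ≠ 0` the same Heisenberg argument makes `α + δ` or `α - δ`
a root; it is non-isotropic with `(α ± δ, δ) = (α, δ)`, contradicting the first case.
-/

namespace IsSl2Triple

open LieModule

variable {R L M : Type*} [Field R] [CharZero R] [LieRing L] [LieAlgebra R L]
  [AddCommGroup M] [Module R M] [LieRingModule L M] [LieModule R L M]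
  {h e f : L}

lemma HasPrimitiveVectorWith.exists_nat_of_pow_toEnd_f_eq_zero {t : IsSl2Triple h e f} {m : M}
    {μ : R} (P : t.HasPrimitiveVectorWith m μ) (hf : ∃ n : ℕ, (toEnd R L M f ^ n) m = 0) :
    ∃ n : ℕ, μ = n := by
  obtain ⟨n, hn, hn'⟩ := Nat.exists_not_and_succ_of_not_zero_of_exists (by simpa using P.ne_zero) hf
  refine ⟨n, ?_⟩
  have h := P.lie_e_pow_succ_toEnd_f n
  rw [hn', lie_zero, eq_comm, smul_eq_zero_iff_left hn, mul_eq_zero, sub_eq_zero] at h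
  exact h.resolve_left (Nat.cast_add_one_ne_zero n)

lemma exists_int_of_pow_toEnd_eq_zero (t : IsSl2Triple h e f) {z : M} {μ : R} (hz : z ≠ 0)
    (hμ : ⁅h, z⁆ = μ • z) (he : ∃ n : ℕ, (toEnd R L M e ^ n) z = 0)
    (hf : ∀ v : M, ∃ n : ℕ, (toEnd R L M f ^ n) v = 0) :
    ∃ k : ℤ, μ = k := by
  obtain ⟨n, hn, hn'⟩ := Nat.exists_not_and_succ_of_not_zero_of_exists (by simpa using hz) he
  have P : t.HasPrimitiveVectorWith ((toEnd R L M e ^ n) z) (μ + 2 * n) :=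
    ⟨hn, t.lie_h_pow_toEnd_e hμ n, by rwa [lie_e_pow_toEnd_e]⟩
  obtain ⟨k, hk⟩ := P.exists_nat_of_pow_toEnd_f_eq_zero (hf _)
  exact ⟨k - 2 * n, by push_cast; linear_combination hk⟩

end IsSl2Triple

namespace LieAlgebra

variable {F L : Type*} [Field F] [LieRing L] [LieAlgebra F L] {x y e : L} {c : F}

lemma lie_lie_pow_ad_eq_smul (hy : ⁅⁅x, y⁆, y⁆ = 0) (he : ⁅⁅x, y⁆, e⁆ = c • e) (k : ℕ) :
    ⁅⁅x, y⁆, (ad F L y ^ k) e⁆ = c • (ad F L y ^ k) e := by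
  induction k with
  | zero => simpa using he
  | succ k ih =>
    rw [pow_succ', Module.End.mul_apply, ad_apply, leibniz_lie, hy, zero_lie, zero_add, ih,
      lie_smul]

lemma lie_pow_ad_succ_eq_smul (hxe : ⁅x, e⁆ = 0) (hy : ⁅⁅x, y⁆, y⁆ = 0)
    (he : ⁅⁅x, y⁆, e⁆ = c • e) (k : ℕ) :
    ⁅x, (ad F L y ^ (k + 1)) e⁆ = ((k + 1 : F) * c) • (ad F L y ^ k) e := by
  induction k with
  | zero => simp [leibniz_lie x y e, he, hxe]
  | succ k ih =>
    rw [pow_succ', Module.End.mul_apply, ad_apply, leibniz_lie, lie_lie_pow_ad_eq_smul hy he, ih,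
      lie_smul, ← ad_apply F, ← Module.End.mul_apply, ← pow_succ', ← add_smul]
    push_cast
    ring_nf

lemma eq_zero_of_pow_ad_eq_zero [CharZero F] (hc : c ≠ 0) (hxe : ⁅x, e⁆ = 0) (hy : ⁅⁅x, y⁆, y⁆ = 0)
    (he : ⁅⁅x, y⁆, e⁆ = c • e) {n : ℕ} (hn : (ad F L y ^ n) e = 0) : e = 0 := by
  induction n with
  | zero => simpa using hn
  | succ n ih =>
    apply ih
    have h := lie_pow_ad_succ_eq_smul hxe hy he n
    rw [hn, lie_zero, eq_comm, smul_eq_zero] at h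
    exact h.resolve_left (mul_ne_zero (Nat.cast_add_one_ne_zero n) hc)

end LieAlgebra

namespace Gen

open LieAlgebra

variable {F L : Type*} [Field F] [LieRing L] [LieAlgebra F L]
  {H : LieSubalgebra F L} {μ ν : Module.Dual F H} {u v x y e f : L}

lemma lie_mem_wt (hu : u ∈ wt F L H μ) (hv : v ∈ wt F L H ν) : ⁅u, v⁆ ∈ wt F L H (μ + ν) :=
  fun h => by
    rw [leibniz_lie, hu h, hv h, smul_lie, lie_smul, LinearMap.add_apply, add_smul]

lemma pow_ad_mem_wt (hu : u ∈ wt F L H μ) (hv : v ∈ wt F L H ν) (n : ℕ) :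
    (ad F L u ^ n) v ∈ wt F L H (ν + n • μ) := by
  induction n with
  | zero => simpa using hv
  | succ n ih =>
    rw [pow_succ', Module.End.mul_apply, ad_apply, succ_nsmul', add_left_comm]
    exact lie_mem_wt hu ih

namespace TData

variable (T : TData F L) {β δ μ : Module.Dual F T.H}

lemma mem_R_of_mem_wt (hv : v ∈ wt F L T.H μ) (hv0 : v ≠ 0) : μ ∈ T.R :=
  (Submodule.ne_bot_iff _).mpr ⟨v, hv, hv0⟩

lemma eq_zero_of_mem_wt (hμ : μ ∉ T.R) (hv : v ∈ wt F L T.H μ) : v = 0 :=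
  not_not.mp fun hv0 => hμ (T.mem_R_of_mem_wt hv hv0)

lemma pr_eq (μ ν : Module.Dual F T.H) : T.pr μ ν = μ (T.t ν) := T.tspec μ (T.t ν)

lemma pr_symm (μ ν : Module.Dual F T.H) : T.pr μ ν = T.pr ν μ := T.bsymm _ _

lemma pr_neg_left (μ ν : Module.Dual F T.H) : T.pr (-μ) ν = -T.pr μ ν := by
  simp [pr_eq]

lemma pr_neg_neg (μ : Module.Dual F T.H) : T.pr (-μ) (-μ) = T.pr μ μ := by
  rw [pr_neg_left, pr_symm, pr_neg_left, neg_neg]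

lemma pr_add_smul_left (α δ ν : Module.Dual F T.H) (s : F) :
    T.pr (α + s • δ) ν = T.pr α ν + s * T.pr δ ν := by
  simp [pr_eq]

lemma pr_add_smul_self (α δ : Module.Dual F T.H) (s : F) :
    T.pr (α + s • δ) (α + s • δ) = T.pr α α + 2 * s * T.pr α δ + s ^ 2 * T.pr δ δ := by
  rw [pr_add_smul_left, T.pr_symm α, T.pr_symm δ, pr_add_smul_left, pr_add_smul_left,
    T.pr_symm δ α]
  ring

lemma ne_zero_of_pr_self_ne_zero (hμ : T.pr μ μ ≠ 0) : μ ≠ 0 := by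
  rintro rfl
  simp [pr_eq] at hμ

lemma t_ne_zero (hμ : μ ≠ 0) : (T.t μ : L) ≠ 0 := by
  intro ht
  refine hμ (LinearMap.ext fun h => ?_)
  rw [← T.tspec μ h, ZeroMemClass.coe_eq_zero.mp ht]
  simp

lemma lie_t_of_mem_wt (hv : v ∈ wt F L T.H μ) (ν : Module.Dual F T.H) :
    ⁅(T.t ν : L), v⁆ = T.pr μ ν • v := by
  rw [hv, pr_eq]

lemma neg_mem_R_of_lie_eq_t (hμ : μ ≠ 0) (hv : v ∈ wt F L T.H (-μ)) (huv : ⁅u, v⁆ = T.t μ) :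
    -μ ∈ T.R := by
  refine T.mem_R_of_mem_wt hv ?_
  rintro rfl
  exact T.t_ne_zero hμ (by rw [← huv, lie_zero])

lemma isSl2Triple_of_lie_eq_t [CharZero F] (hβ : T.pr β β ≠ 0) (he : e ∈ wt F L T.H β)
    (hf : f ∈ wt F L T.H (-β)) (hef : ⁅e, f⁆ = T.t β) :
    IsSl2Triple ((2 / T.pr β β) • (T.t β : L)) e ((2 / T.pr β β) • f) where
  h_ne_zero :=
    smul_ne_zero (by simpa using hβ) (T.t_ne_zero (T.ne_zero_of_pr_self_ne_zero hβ))
  lie_e_f := by rw [lie_smul, hef]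
  lie_h_e_nsmul := by
    rw [smul_lie, T.lie_t_of_mem_wt he, smul_smul, div_mul_cancel₀ _ hβ, ofNat_smul_eq_nsmul]
  lie_h_f_nsmul := by
    rw [smul_lie, lie_smul, T.lie_t_of_mem_wt hf, pr_neg_left, smul_smul, smul_smul,
      ← Nat.cast_smul_eq_nsmul F, smul_smul, ← neg_smul]
    congr 1
    field_simp
    norm_num

lemma eq_zero_of_pow_ad_eq_zero [CharZero F] (hδ : T.pr δ δ = 0) (hy : y ∈ wt F L T.H (-δ))
    (hxy : ⁅x, y⁆ = T.t δ) (he : e ∈ wt F L T.H μ) (hμ : T.pr μ δ ≠ 0) (hxe : ⁅x, e⁆ = 0)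
    {n : ℕ} (hn : (ad F L y ^ n) e = 0) : e = 0 :=
  LieAlgebra.eq_zero_of_pow_ad_eq_zero hμ hxe
    (by rw [hxy, T.lie_t_of_mem_wt hy, pr_neg_left, hδ, neg_zero, zero_smul])
    (by rw [hxy, T.lie_t_of_mem_wt he]) hn

end TData

namespace TAlg

variable (T : TAlg F L) {α β γ δ ρ : Module.Dual F T.H}

lemma neg_mem_Rx (hβ : β ∈ T.Rx) : -β ∈ T.Rx := by
  obtain ⟨e, he, he0⟩ := (Submodule.ne_bot_iff _).mp hβ.1
  obtain ⟨f, hf, hef⟩ := T.t3b β hβ e he he0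
  exact ⟨T.neg_mem_R_of_lie_eq_t (T.ne_zero_of_pr_self_ne_zero hβ.2) hf hef,
    by rw [T.pr_neg_neg]; exact hβ.2⟩

lemma neg_mem_R0 (hδ : δ ∈ T.R0) : -δ ∈ T.R0 := by
  rcases eq_or_ne δ 0 with rfl | hδ0
  · rwa [neg_zero]
  obtain ⟨x, -, y, hy, hxy⟩ := T.t3a δ hδ
  exact ⟨T.neg_mem_R_of_lie_eq_t hδ0 hy hxy, by rw [T.pr_neg_neg]; exact hδ.2⟩

variable [CharZero F]

lemma exists_int_two_mul_pr (hβ : β ∈ T.Rx) (hρ : ρ ∈ T.R) :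
    ∃ k : ℤ, 2 * T.pr ρ β = k * T.pr β β := by
  obtain ⟨e, he, he0⟩ := (Submodule.ne_bot_iff _).mp hβ.1
  obtain ⟨f, hf, hef⟩ := T.t3b β hβ e he he0
  obtain ⟨z, hz, hz0⟩ := (Submodule.ne_bot_iff _).mp hρ
  have hsl2 := T.isSl2Triple_of_lie_eq_t hβ.2 he hf hef
  obtain ⟨k, hk⟩ := hsl2.exists_int_of_pow_toEnd_eq_zero hz0 (μ := 2 / T.pr β β * T.pr ρ β) (by rw [smul_lie, T.lie_t_of_mem_wt hz, smul_smul])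
    (T.t4 β hβ e he z) fun v => by
      obtain ⟨n, hn⟩ := T.t4 (-β) (T.neg_mem_Rx hβ) f hf v
      refine ⟨n, ?_⟩
      rw [map_smul, smul_pow, LinearMap.smul_apply]
      exact (congrArg _ hn).trans (smul_zero _)
  have ha : T.pr β β ≠ 0 := hβ.2
  exact ⟨k, by rw [← hk]; field_simp⟩

lemma dvd_of_add_smul_mem_R (hγ : γ ∈ T.Rx) (hδ : δ ∈ T.R0) {m : ℤ}
    (hm : 2 * T.pr δ γ = m * T.pr γ γ) {k : ℤ} (hk : γ + (k : F) • δ ∈ T.R)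
    (hkm : 1 + k * m ≠ 0) : 1 + k * m ∣ m := by
  have ha : T.pr γ γ ≠ 0 := hγ.2
  have hnorm : T.pr (γ + (k : F) • δ) (γ + (k : F) • δ) = ((1 + k * m : ℤ) : F) * T.pr γ γ := by
    rw [T.pr_add_smul_self, hδ.2, T.pr_symm γ δ]
    push_cast
    linear_combination k * hm
  have hRx : γ + (k : F) • δ ∈ T.Rx := ⟨hk, hnorm ▸ mul_ne_zero (by exact_mod_cast hkm) ha⟩
  obtain ⟨j, hj⟩ := T.exists_int_two_mul_pr hRx hδ.1
  rw [T.pr_symm, T.pr_add_smul_left, hδ.2, mul_zero, add_zero, T.pr_symm, hm, hnorm] at hj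
  refine ⟨j, Int.cast_injective (α := F) (mul_right_cancel₀ ha ?_)⟩
  push_cast at hj ⊢
  linear_combination hj

lemma two_mul_pr_ne_pos_mul (hγ : γ ∈ T.Rx) (hδ : δ ∈ T.R0) {m : ℤ} (hm0 : 0 < m) :
    2 * T.pr δ γ ≠ m * T.pr γ γ := by
  intro hm
  have hc : T.pr γ δ ≠ 0 := by
    rw [T.pr_symm]
    rintro hc
    rw [hc, mul_zero] at hm
    exact mul_ne_zero (by exact_mod_cast hm0.ne') hγ.2 hm.symm
  have hγδ : γ + ((1 : ℤ) : F) • δ ∉ T.R := fun h => by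
    have := Int.le_of_dvd hm0 (T.dvd_of_add_smul_mem_R hγ hδ hm h (by omega))
    omega
  -- `γ - 2δ` would not do: for `m = 1`, `1 - 2m = -1` divides `m`.
  have hγ3δ : γ + ((-3 : ℤ) : F) • δ ∉ T.R := fun h => by
    have := Int.le_of_dvd hm0 (neg_dvd.mpr (T.dvd_of_add_smul_mem_R hγ hδ hm h (by omega)))
    omega
  obtain ⟨x, hx, y, hy, hxy⟩ := T.t3a δ hδ
  obtain ⟨e, he, he0⟩ := (Submodule.ne_bot_iff _).mp hγ.1
  have hxe : ⁅x, e⁆ = 0 :=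
    T.eq_zero_of_mem_wt hγδ (by convert lie_mem_wt hx he using 2; module)
  have hy3e : (ad F L y ^ 3) e = 0 :=
    T.eq_zero_of_mem_wt hγ3δ (by convert pow_ad_mem_wt hy he 3 using 2; push_cast; module)
  exact he0 (T.eq_zero_of_pow_ad_eq_zero hδ.2 hy hxy he hc hxe hy3e)

lemma pr_eq_zero_of_mem_Rx (hγ : γ ∈ T.Rx) (hδ : δ ∈ T.R0) : T.pr γ δ = 0 := by
  obtain ⟨m, hm⟩ := T.exists_int_two_mul_pr hγ hδ.1
  rcases lt_trichotomy m 0 with hneg | rfl | hpos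
  · refine absurd ?_ (T.two_mul_pr_ne_pos_mul hγ (T.neg_mem_R0 hδ) (neg_pos.mpr hneg))
    rw [T.pr_neg_left]
    push_cast
    linear_combination -hm
  · rw [T.pr_symm]
    simpa using hm
  · exact absurd hm (T.two_mul_pr_ne_pos_mul hγ hδ hpos)

lemma add_smul_not_mem_R (hα : T.pr α α = 0) (hδ : δ ∈ T.R0) (hc : T.pr α δ ≠ 0) {s : F}
    (hs : s ≠ 0) : α + s • δ ∉ T.R := by
  intro h
  have hnorm : T.pr (α + s • δ) (α + s • δ) ≠ 0 := by
    rw [T.pr_add_smul_self, hα, hδ.2]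
    simp [hs, hc]
  have := T.pr_eq_zero_of_mem_Rx ⟨h, hnorm⟩ hδ
  rw [T.pr_add_smul_left, hδ.2, mul_zero, add_zero] at this
  exact hc this

lemma pr_eq_zero_of_mem_R0 (hα : α ∈ T.R0) (hδ : δ ∈ T.R0) : T.pr α δ = 0 := by
  by_contra hc
  obtain ⟨x, hx, y, hy, hxy⟩ := T.t3a δ hδ
  obtain ⟨u, hu, hu0⟩ := (Submodule.ne_bot_iff _).mp hα.1
  have hxu : ⁅x, u⁆ = 0 := T.eq_zero_of_mem_wt (T.add_smul_not_mem_R hα.2 hδ hc one_ne_zero)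
    (by convert lie_mem_wt hx hu using 2; module)
  have hyu : (ad F L y ^ 1) u = 0 := T.eq_zero_of_mem_wt
    (T.add_smul_not_mem_R hα.2 hδ hc (neg_ne_zero.mpr one_ne_zero))
    (by convert pow_ad_mem_wt hy hu 1 using 2; module)
  exact hu0 (T.eq_zero_of_pow_ad_eq_zero hδ.2 hy hxy hu hc hxu hyu)

end TAlg

end Gen

/-- For `L ∈ 𝒯`, `(R, R⁰) = {0}`: every root is orthogonal to every
isotropic root. -/
theorem root_orthogonal_isotropic
    (F L : Type*) [Field F] [CharZero F] [LieRing L] [LieAlgebra F L]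
    (T : Gen.TAlg F L) :
    ∀ α ∈ T.toTData.R, ∀ δ ∈ T.toTData.R0, T.toTData.pr α δ = 0 := by
  intro α hα δ hδ
  by_cases hαα : T.pr α α = 0
  · exact T.pr_eq_zero_of_mem_R0 ⟨hα, hαα⟩ hδ
  · exact T.pr_eq_zero_of_mem_Rx ⟨hα, hαα⟩ hδ
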